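/- The energy E(p) of a Λ₀-path p equals the number of nodes of colour 0 in the highest-lift partition λ(p) coloured with 0, i.e. E(p) = #{(i,j) : 1 ≤ j ≤ λ(p)_i, j - i ≡ 0 (mod n)}. -/

import Mathlib

/-- A `Λ₀`-path: a sequence `γ : ℕ → {0,…,n-1}` with `γ k = k % n` for all large `k`. -/
def PathSet (n : ℕ) : Set (ℕ → ℕ) :=
  {γ | (∀ k, γ k < n) ∧ ∃ K, ∀ k, K ≤ k → γ k = k % n}

/-- The length of a path: the minimal `K` with `γ k = k % n` for all `k ≥ K`. -/
noncomputable def plen (n : ℕ) (γ : ℕ → ℕ) : ℕ :=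
  sInf {K | ∀ k, K ≤ k → γ k = k % n}

/-- The sequence `t_k` of the highest-lift construction: `t_k = 0` for `k ≥ k*`, and,
recursively downwards, `t_k ≡ k - γ k (mod n)` with `0 ≤ t_k - t_{k+1} < n`. -/
def tseq (n : ℕ) (γ : ℕ → ℕ) (kstar : ℕ) (k : ℕ) : ℤ :=
  if h : kstar ≤ k then 0
  else tseq n γ kstar (k + 1) + (((k : ℤ) - γ k - tseq n γ kstar (k + 1)) % n)
termination_by kstar - k
decreasing_by omega

/-- The highest-lift partition of a path, given as the (weakly decreasing) sequence of
its parts: part number `j+1` is the number of `k` with `t_k ≥ j+1`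
(i.e. the partition whose conjugate is `(t_0, t_1, …, t_{k*-1})`). -/
noncomputable def highestLift (n : ℕ) (γ : ℕ → ℕ) : ℕ → ℕ :=
  fun j => {k : ℕ | (j : ℤ) + 1 ≤ tseq n γ (plen n γ) k}.ncard

/-- A partition, given as a weakly decreasing sequence of parts (extended by zeros). -/
def IsPartitionFun (f : ℕ → ℕ) : Prop :=
  (∀ i j : ℕ, i ≤ j → f j ≤ f i) ∧ ∃ N, ∀ i, N ≤ i → f i = 0

/-- The set of `n`-regular partitions: no part value `v ≥ 1` occurs `n` or more times. -/
def RegularSet (n : ℕ) : Set (ℕ → ℕ) :=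
  {f | IsPartitionFun f ∧ ∀ v : ℕ, 1 ≤ v → {j : ℕ | f j = v}.ncard < n}

/-- `H(a,b) = 0` if `a < b`, and `1` if `a ≥ b`. -/
def Hfun (a b : ℕ) : ℤ := if a < b then 0 else 1

/-- The energy of a path: `E(p) = Σ_{k≥1} k (H(γ(k-1),γ(k)) - H(γ̄(k-1),γ̄(k)))`,
where `γ̄ k = k % n`; the terms with `k > k*` vanish, so the sum may be taken
over `1 ≤ k ≤ k*`. -/
noncomputable def energy (n : ℕ) (γ : ℕ → ℕ) : ℤ :=
  ∑ k ∈ Finset.Icc 1 (plen n γ),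
    (k : ℤ) * (Hfun (γ (k - 1)) (γ k) - Hfun ((k - 1) % n) (k % n))

/-!
Write `t` for the highest-lift sequence and `γ̄ k = k % n`. For `a, b < n`, `n * H(a, b)` equals
`((b - a - 1) mod n) - (b - a - 1)`, and `t k - t (k + 1)` is the residue of
`γ (k + 1) - γ k - 1`. Hence `n * (H(γ k, γ (k + 1)) - H(γ̄ k, γ̄ (k + 1))) = a k - a (k + 1)`
with `a k = t k + γ k - γ̄ k`, and Abel summation turns `n * E(p)` into `∑_{k < k*} a k`.
On the other side, column `k + 1` of `λ(p)` has `t k` nodes, and exactly `a k / n` of them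
(the rows `i ≤ t k` with `i ≡ k + 1`) have colour `0`.
-/

open Finset

theorem Antitone.lt_ncard_setOf_le_iff {α : Type*} [Preorder α] {f : ℕ → α} (hf : Antitone f)
    {c : α} (hfin : {k | c ≤ f k}.Finite) {j : ℕ} : j < {k | c ≤ f k}.ncard ↔ c ≤ f j := by
  constructor
  · intro hj
    by_contra hcj
    have hsub : {k | c ≤ f k} ⊆ Set.Iio j := fun k hk =>
      lt_of_not_ge fun hjk => hcj (hk.trans (hf hjk))
    have := Set.ncard_le_ncard hsub (Set.finite_Iio j)
    rw [Set.ncard_Iio_nat] at this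
    omega
  · intro hcj
    have hsub : Set.Iic j ⊆ {k | c ≤ f k} := fun k hk => hcj.trans (hf hk)
    simpa using Set.ncard_le_ncard hsub hfin

theorem Int.emod_sub_self_eq_ite {z n : ℤ} (h₁ : -n ≤ z) (h₂ : z < n) :
    z % n - z = if z < 0 then n else 0 := by
  split_ifs with hz
  · rw [← Int.add_emod_right, Int.emod_eq_of_lt (by omega) (by omega)]
    ring
  · rw [Int.emod_eq_of_lt (by omega) h₂, sub_self]

theorem Finset.sum_range_succ_mul_sub {R : Type*} [CommRing R] (a : ℕ → R) (K : ℕ) :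
    ∑ k ∈ range K, ((k : R) + 1) * (a k - a (k + 1)) = ∑ k ∈ range K, a k - K * a K := by
  induction K with
  | zero => simp
  | succ K ih =>
    rw [sum_range_succ, ih, sum_range_succ]
    push_cast
    ring

theorem mul_Hfun_eq_of_modEq {n a b : ℕ} {d : ℤ} (ha : a < n) (hb : b < n)
    (hd : d ∈ Set.Ico 0 (n : ℤ)) (hmod : d ≡ b - a - 1 [ZMOD n]) :
    n * Hfun a b = d - (b - a - 1) := by
  have h := Int.emod_sub_self_eq_ite (z := (b : ℤ) - a - 1) (n := n) (by omega) (by omega)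
  rw [← hmod, Int.emod_eq_of_lt hd.1 hd.2] at h
  rw [Hfun, h]
  split_ifs <;> omega

section tseq

variable {n : ℕ} {γ : ℕ → ℕ} {kstar k : ℕ}

theorem tseq_of_le (h : kstar ≤ k) : tseq n γ kstar k = 0 := by
  rw [tseq, dif_pos h]

theorem tseq_of_lt (h : k < kstar) :
    tseq n γ kstar k =
      tseq n γ kstar (k + 1) + ((k - γ k - tseq n γ kstar (k + 1)) % n) := by
  rw [tseq, dif_neg (not_le.2 h)]

theorem tseq_sub_tseq_succ_mem_Ico (hn : 0 < n) (k : ℕ) :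
    tseq n γ kstar k - tseq n γ kstar (k + 1) ∈ Set.Ico 0 (n : ℤ) := by
  rcases le_or_gt kstar k with h | h
  · simp [tseq_of_le h, tseq_of_le (h.trans k.le_succ), hn]
  · rw [tseq_of_lt h, add_sub_cancel_left]
    exact ⟨Int.emod_nonneg _ (by omega), Int.emod_lt_of_pos _ (by omega)⟩

theorem tseq_antitone (hn : 0 < n) : Antitone (tseq n γ kstar) :=
  antitone_nat_of_succ_le fun k => sub_nonneg.1 (tseq_sub_tseq_succ_mem_Ico hn k).1

theorem tseq_nonneg (hn : 0 < n) (k : ℕ) : 0 ≤ tseq n γ kstar k :=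
  (tseq_of_le (le_max_right k kstar)).symm.le.trans (tseq_antitone hn (le_max_left k kstar))

theorem tseq_modEq (hγ : ∀ j, kstar ≤ j → γ j = j % n) (k : ℕ) :
    tseq n γ kstar k ≡ k - γ k [ZMOD n] := by
  rcases le_or_gt kstar k with h | h
  · rw [tseq_of_le h, hγ k h, Int.natCast_mod]
    simpa using ((Int.ModEq.refl (k : ℤ)).sub (Int.mod_modEq (k : ℤ) n)).symm
  · rw [tseq_of_lt h]
    simpa using (Int.mod_modEq ((k : ℤ) - γ k - tseq n γ kstar (k + 1)) n).add_left
      (tseq n γ kstar (k + 1))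

end tseq

section energy

variable {n : ℕ} {γ : ℕ → ℕ} {K : ℕ}

theorem mul_Hfun_sub_Hfun (hn : 0 < n) (hγn : ∀ k, γ k < n) (hγK : ∀ k, K ≤ k → γ k = k % n)
    (k : ℕ) :
    n * (Hfun (γ k) (γ (k + 1)) - Hfun (k % n) ((k + 1) % n)) =
      (tseq n γ K k + γ k - (k : ℤ) % n) -
        (tseq n γ K (k + 1) + γ (k + 1) - ((k + 1 : ℕ) : ℤ) % n) := by
  have hpath : n * Hfun (γ k) (γ (k + 1)) =
      tseq n γ K k - tseq n γ K (k + 1) - (γ (k + 1) - γ k - 1) := by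
    refine mul_Hfun_eq_of_modEq (hγn k) (hγn (k + 1)) (tseq_sub_tseq_succ_mem_Ico hn k) ?_
    convert (tseq_modEq hγK k).sub (tseq_modEq hγK (k + 1)) using 1
    push_cast
    ring
  have hground : n * Hfun (k % n) ((k + 1) % n) = 0 - (((k + 1) % n : ℕ) - (k % n : ℕ) - 1) := by
    refine mul_Hfun_eq_of_modEq (Nat.mod_lt _ hn) (Nat.mod_lt _ hn) (by simp [hn]) ?_
    convert (((Int.mod_modEq ((k : ℤ) + 1) n).sub (Int.mod_modEq (k : ℤ) n)).sub_right 1).symm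
      using 1 <;> push_cast <;> ring
  rw [mul_sub, hpath, hground]
  push_cast
  ring

theorem mul_sum_Icc_Hfun_sub_Hfun (hn : 0 < n) (hγn : ∀ k, γ k < n)
    (hγK : ∀ k, K ≤ k → γ k = k % n) :
    n * ∑ k ∈ Icc 1 K, (k : ℤ) * (Hfun (γ (k - 1)) (γ k) - Hfun ((k - 1) % n) (k % n)) =
      ∑ k ∈ range K, (tseq n γ K k + γ k - (k : ℤ) % n) := by
  rw [← Ico_add_one_right_eq_Icc, sum_Ico_eq_sum_range, Nat.add_sub_cancel,
    mul_sum]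
  set a : ℕ → ℤ := fun k => tseq n γ K k + γ k - (k : ℤ) % n
  have haK : a K = 0 := by simp [a, tseq_of_le le_rfl, hγK K le_rfl]
  rw [← sub_zero (∑ k ∈ range K, a k), ← mul_zero (K : ℤ), ← haK, ← sum_range_succ_mul_sub]
  refine sum_congr rfl fun k _ => ?_
  rw [add_comm 1 k, Nat.add_sub_cancel, mul_left_comm, mul_Hfun_sub_Hfun hn hγn hγK]
  push_cast
  rfl

end energy

theorem natCast_mul_count_modEq {n T g k : ℕ} (hn : 0 < n) (hg : g < n)
    (hT : (T : ℤ) ≡ k - g [ZMOD n]) :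
    n * (Nat.count (· ≡ k [MOD n]) T : ℤ) = T + g - (k : ℤ) % n := by
  have hTk : (T : ℤ) % n = ((k : ℤ) % n - g) % n :=
    hT.trans ((Int.mod_modEq (k : ℤ) n).symm.sub_right g)
  have hk₀ := Int.emod_nonneg (k : ℤ) (b := n) (by omega)
  have hk₁ := Int.emod_lt_of_pos (k : ℤ) (b := n) (by omega)
  have hz := Int.emod_sub_self_eq_ite (z := (k : ℤ) % n - g) (n := n) (by omega) (by omega)
  rw [← hTk] at hz
  have hdiv := Int.mul_ediv_add_emod (T : ℤ) n
  rw [Nat.count_modEq_card T hn k]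
  have hcond : k % n < T % n ↔ (k : ℤ) % n < (T : ℤ) % n := by
    rw [← Int.natCast_mod, ← Int.natCast_mod, Nat.cast_lt]
  push_cast [apply_ite (Nat.cast : ℕ → ℤ), hcond]
  split_ifs at hz ⊢ <;> linarith

theorem lt_highestLift_iff {n : ℕ} {γ : ℕ → ℕ} (hn : 0 < n) (x k : ℕ) :
    k < highestLift n γ x ↔ x < (tseq n γ (plen n γ) k).toNat := by
  have hfin : {k | (x : ℤ) + 1 ≤ tseq n γ (plen n γ) k}.Finite :=
    (Set.finite_Iio (plen n γ)).subset fun k hk => lt_of_not_ge fun hle => by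
      rw [Set.mem_ofPred_eq, tseq_of_le hle] at hk
      omega
  rw [highestLift, (tseq_antitone hn).lt_ncard_setOf_le_iff hfin, Int.lt_toNat,
    Int.add_one_le_iff]

theorem ncard_colourZero_nodes {n : ℕ} {γ : ℕ → ℕ} (hn : 0 < n) :
    {p : ℕ × ℕ | 1 ≤ p.1 ∧ 1 ≤ p.2 ∧ p.2 ≤ highestLift n γ (p.1 - 1) ∧
        ((p.2 : ℤ) - (p.1 : ℤ)) % (n : ℤ) = 0}.ncard =
      ∑ k ∈ range (plen n γ), Nat.count (· ≡ k [MOD n]) (tseq n γ (plen n γ) k).toNat := by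
  have hnodes : {p : ℕ × ℕ | 1 ≤ p.1 ∧ 1 ≤ p.2 ∧ p.2 ≤ highestLift n γ (p.1 - 1) ∧
        ((p.2 : ℤ) - (p.1 : ℤ)) % (n : ℤ) = 0} =
      ↑((range (plen n γ)).biUnion fun k =>
        {x ∈ range (tseq n γ (plen n γ) k).toNat | x ≡ k [MOD n]}.image
          fun x => (x + 1, k + 1)) := by
    ext ⟨_ | x, _ | k⟩
    · simp
    · simp
    · simp
    · simp only [EuclideanDomain.mod_eq_zero, Set.mem_ofPred_eq, le_add_iff_nonneg_left, zero_le,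
        add_tsub_cancel_right, Order.add_one_le_iff, Nat.cast_add, Nat.cast_one,
        add_sub_add_right_eq_sub, true_and, coe_biUnion, coe_range, Set.mem_Iio, coe_image,
        coe_filter, mem_range, Set.mem_iUnion, Set.mem_image, Prod.mk.injEq,
        Nat.add_right_cancel_iff, existsAndEq, exists_and_left, exists_prop, exists_eq_right_right]
      rw [lt_highestLift_iff hn, ← Nat.modEq_iff_dvd]
      refine ⟨fun h => ⟨h, lt_of_not_ge fun hle => ?_⟩, And.left⟩
      simpa [tseq_of_le hle] using h.1
  rw [hnodes, Set.ncard_coe_finset, card_biUnion]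
  · refine sum_congr rfl fun k _ => ?_
    rw [card_image_of_injective _ (fun x y h => by simpa using h), Nat.count_eq_card_filter_range]
  · intro k₁ _ k₂ _ hne
    simp only [Function.onFun, disjoint_left, mem_image]
    rintro _ ⟨x₁, _, rfl⟩ ⟨x₂, _, h⟩
    simp only [Prod.mk.injEq] at h
    omega

/-- The energy of a `Λ₀`-path equals the number of colour-`0` nodes of its highest-lift
partition coloured with `0`: the nodes `(i,j)` with `1 ≤ j ≤ λ_i` and `j - i ≡ 0 (mod n)`. -/
theorem stmt5 (n : ℕ) (hn : 2 ≤ n) (γ : ℕ → ℕ) (hγ : γ ∈ PathSet n) :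
    energy n γ =
      ({p : ℕ × ℕ | 1 ≤ p.1 ∧ 1 ≤ p.2 ∧ p.2 ≤ highestLift n γ (p.1 - 1) ∧
        ((p.2 : ℤ) - (p.1 : ℤ)) % (n : ℤ) = 0}.ncard : ℤ) := by
  obtain ⟨hγn, hγper⟩ := hγ
  have hn₀ : 0 < n := by omega
  have hγK : ∀ k, plen n γ ≤ k → γ k = k % n := Nat.sInf_mem hγper
  refine mul_left_cancel₀ (Int.natCast_ne_zero.2 hn₀.ne') ?_
  rw [energy, mul_sum_Icc_Hfun_sub_Hfun hn₀ hγn hγK, ncard_colourZero_nodes hn₀, Nat.cast_sum,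
    mul_sum]
  refine sum_congr rfl fun k _ => ?_
  have hT := Int.toNat_of_nonneg (tseq_nonneg (γ := γ) (kstar := plen n γ) hn₀ k)
  rw [natCast_mul_count_modEq hn₀ (hγn k) (hT ▸ tseq_modEq hγK k), hT]
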